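/- Let U be uniform on the unit sphere of ℝ^q with q ≥ m, and let 0 < C₂ ≤ H_kk ≤ C₁ for r < k ≤ m. Then for r < j ≤ m, E[H_jj U_j² / (Σ_{k=1}^q H_kk U_k²)] ≤ C₁ / ((m − r) C₂). -/

import Mathlib

open MeasureTheory ProbabilityTheory Finset

/-!
Orthogonal invariance of `U` contains invariance under coordinate permutations, so the ratios
`U_k² / (U_{r+1}² + ⋯ + U_m²)` for the `m - r` band indices `k` all have the same mean; they sum
to at most `1`, hence each has mean at most `1 / (m - r)`. Pointwise, the band bounds on `H`
give `H_j U_j² / ∑ H_k U_k² ≤ (C₁ / C₂) · U_j² / (U_{r+1}² + ⋯ + U_m²)`.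
-/

lemma Matrix.permMatrix_mem_orthogonalGroup {n R : Type*} [DecidableEq n] [Fintype n]
    [CommRing R] (σ : Equiv.Perm n) : σ.permMatrix R ∈ Matrix.orthogonalGroup n R := by
  rw [Matrix.mem_orthogonalGroup_iff, Matrix.transpose_permMatrix, ← Matrix.permMatrix_mul,
    inv_mul_cancel, Matrix.permMatrix_one]

section Exchangeable

variable {Ω ι : Type*} [MeasurableSpace Ω] {μ : Measure Ω}

lemma identDistrib_comp_perm_of_orthogonalGroup [Fintype ι] [DecidableEq ι] {U : Ω → ι → ℝ}
    (hU : ∀ O : Matrix.orthogonalGroup ι ℝ,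
      IdentDistrib (fun ω => (O : Matrix ι ι ℝ).mulVec (U ω)) U μ μ)
    (σ : Equiv.Perm ι) : IdentDistrib (fun ω => U ω ∘ σ) U μ μ := by
  simpa only [Matrix.permMatrix_mulVec] using
    hU ⟨σ.permMatrix ℝ, Matrix.permMatrix_mem_orthogonalGroup σ⟩

lemma measurable_apply_div_sum (s : Finset ι) (j : ι) :
    Measurable fun v : ι → ℝ => v j / ∑ k ∈ s, v k :=
  (measurable_pi_apply j).div (Finset.measurable_sum s fun k _ => measurable_pi_apply k)

lemma apply_div_sum_le_one {W : ι → ℝ} (hW : ∀ k, 0 ≤ W k) {s : Finset ι} {j : ι}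
    (hj : j ∈ s) : W j / ∑ k ∈ s, W k ≤ 1 :=
  div_le_one_of_le₀ (single_le_sum (fun k _ => hW k) hj) (sum_nonneg fun k _ => hW k)

lemma integrable_apply_div_sum [IsFiniteMeasure μ] {W : Ω → ι → ℝ} (hW : AEMeasurable W μ)
    (hW0 : ∀ ω k, 0 ≤ W ω k) {s : Finset ι} {j : ι} (hj : j ∈ s) :
    Integrable (fun ω => W ω j / ∑ k ∈ s, W ω k) μ := by
  refine Integrable.of_bound
    ((measurable_apply_div_sum s j).comp_aemeasurable hW).aestronglyMeasurable 1 ?_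
  filter_upwards with ω
  rw [Real.norm_of_nonneg (div_nonneg (hW0 ω j) (sum_nonneg fun k _ => hW0 ω k))]
  exact apply_div_sum_le_one (hW0 ω) hj

theorem integral_apply_div_sum_le_inv_card [DecidableEq ι] [IsProbabilityMeasure μ]
    {W : Ω → ι → ℝ} (hW : ∀ σ : Equiv.Perm ι, IdentDistrib (fun ω => W ω ∘ σ) W μ μ)
    (hW0 : ∀ ω k, 0 ≤ W ω k) {s : Finset ι} {j : ι} (hj : j ∈ s) :
    ∫ ω, W ω j / ∑ k ∈ s, W ω k ∂μ ≤ (#s : ℝ)⁻¹ := by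
  set g : ι → Ω → ℝ := fun k ω => W ω k / ∑ i ∈ s, W ω i
  have hint : ∀ k ∈ s, Integrable (g k) μ := fun k hk =>
    integrable_apply_div_sum (hW 1).aemeasurable_snd hW0 hk
  have hsame : ∀ k ∈ s, ∫ ω, g k ω ∂μ = ∫ ω, g j ω ∂μ := by
    intro k hk
    have hswap : ∀ v : ι → ℝ, ∑ i ∈ s, v (Equiv.swap j k i) = ∑ i ∈ s, v i := fun v =>
      Equiv.Perm.sum_comp _ s v fun i hi => by
        obtain ⟨-, rfl | rfl⟩ := Equiv.swap_apply_ne_self_iff.1 hi <;> assumption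
    have h := ((hW (Equiv.swap j k)).comp (measurable_apply_div_sum s k)).integral_eq
    simp only [Function.comp_def, Equiv.swap_apply_right, hswap] at h
    exact h.symm
  have hsum : (#s : ℝ) * ∫ ω, g j ω ∂μ ≤ 1 :=
    calc (#s : ℝ) * ∫ ω, g j ω ∂μ = ∫ ω, ∑ k ∈ s, g k ω ∂μ := by
          rw [integral_finsetSum s hint, sum_congr rfl hsame, sum_const, nsmul_eq_mul]
      _ ≤ ∫ _, (1 : ℝ) ∂μ := by
          refine integral_mono (integrable_finsetSum s hint) (integrable_const 1) fun ω => ?_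
          simpa only [g, ← sum_div] using div_self_le_one (∑ i ∈ s, W ω i)
      _ = 1 := by simp
  have hcard : (0 : ℝ) < #s := by exact_mod_cast card_pos.2 ⟨j, hj⟩
  rwa [← one_div, le_div_iff₀ hcard, mul_comm]

end Exchangeable

lemma mul_div_sum_mul_le_div_mul_div_sum {ι : Type*} [Fintype ι] {H x : ι → ℝ}
    {C₁ C₂ : ℝ} (hC₂ : 0 < C₂) (hH : ∀ k, 0 ≤ H k) (hx : ∀ k, 0 ≤ x k) {s : Finset ι}
    (hHs : ∀ k ∈ s, C₂ ≤ H k) {j : ι} (hj : j ∈ s) (hHj : H j ≤ C₁) :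
    H j * x j / ∑ k, H k * x k ≤ C₁ / C₂ * (x j / ∑ k ∈ s, x k) := by
  obtain hS | hS := (sum_nonneg fun k (_ : k ∈ s) => hx k).eq_or_lt
  · have hxj : x j = 0 := le_antisymm (hS ▸ single_le_sum (fun k _ => hx k) hj) (hx j)
    simp [hxj]
  have hden : C₂ * ∑ k ∈ s, x k ≤ ∑ k, H k * x k :=
    calc C₂ * ∑ k ∈ s, x k ≤ ∑ k ∈ s, H k * x k := by
          rw [mul_sum]
          exact sum_le_sum fun k hk => mul_le_mul_of_nonneg_right (hHs k hk) (hx k)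
      _ ≤ ∑ k, H k * x k :=
          sum_le_sum_of_subset_of_nonneg (subset_univ s) fun k _ _ => mul_nonneg (hH k) (hx k)
  calc H j * x j / ∑ k, H k * x k ≤ C₁ * x j / (C₂ * ∑ k ∈ s, x k) :=
        div_le_div₀ (mul_nonneg (hC₂.le.trans ((hHs j hj).trans hHj)) (hx j))
          (mul_le_mul_of_nonneg_right hHj (hx j)) (mul_pos hC₂ hS) hden
    _ = C₁ / C₂ * (x j / ∑ k ∈ s, x k) := by rw [div_mul_div_comm]

theorem kendall_nonspiked_eig_upper_bound_general
    {Ω : Type*} [MeasurableSpace Ω] (μ : Measure Ω) [IsProbabilityMeasure μ]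
    {q : ℕ} (U : Ω → Fin q → ℝ)
    -- `U` is uniform on the unit sphere of ℝ^q :
    (hUunif : ∀ O : Matrix.orthogonalGroup (Fin q) ℝ,
      ProbabilityTheory.IdentDistrib (fun ω => (O : Matrix (Fin q) (Fin q) ℝ).mulVec (U ω)) U μ μ)
    (H : Fin q → ℝ) (hHnonneg : ∀ k, 0 ≤ H k)
    (r m : ℕ) (hmq : m ≤ q)
    (C₁ C₂ : ℝ) (hC₂ : 0 < C₂)
    (hHband : ∀ k : Fin q, r ≤ (k : ℕ) → (k : ℕ) < m → C₂ ≤ H k ∧ H k ≤ C₁)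
    (j : Fin q) (hjr : r ≤ (j : ℕ)) (hjm : (j : ℕ) < m) :
    ∫ ω, (H j * U ω j ^ 2) / (∑ k, H k * U ω k ^ 2) ∂μ ≤ C₁ / ((m - r : ℕ) * C₂) := by
  set band : Finset (Fin q) := (Ico r m).attachFin fun k hk => (mem_Ico.1 hk).2.trans_le hmq
  have hband : ∀ k, k ∈ band ↔ r ≤ (k : ℕ) ∧ (k : ℕ) < m := fun k => by
    rw [mem_attachFin, mem_Ico]
  have hjband : j ∈ band := (hband j).2 ⟨hjr, hjm⟩
  set W : Ω → Fin q → ℝ := fun ω k => U ω k ^ 2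
  have hW : ∀ σ : Equiv.Perm (Fin q), IdentDistrib (fun ω => W ω ∘ σ) W μ μ := fun σ =>
    (identDistrib_comp_perm_of_orthogonalGroup hUunif σ).comp
      (measurable_pi_lambda _ fun k => (measurable_pi_apply k).pow_const 2)
  have hmean : ∫ ω, W ω j / ∑ k ∈ band, W ω k ∂μ ≤ ((m - r : ℕ) : ℝ)⁻¹ := by
    simpa only [band, card_attachFin, Nat.card_Ico] using
      integral_apply_div_sum_le_inv_card hW (fun ω k => sq_nonneg _) hjband
  calc ∫ ω, (H j * U ω j ^ 2) / (∑ k, H k * U ω k ^ 2) ∂μ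
      ≤ ∫ ω, C₁ / C₂ * (W ω j / ∑ k ∈ band, W ω k) ∂μ := by
        refine integral_mono_of_nonneg (ae_of_all _ fun ω => ?_)
          ((integrable_apply_div_sum (hW 1).aemeasurable_snd (fun ω k => sq_nonneg _)
            hjband).const_mul _) (ae_of_all _ fun ω => ?_)
        · exact div_nonneg (mul_nonneg (hHnonneg j) (sq_nonneg _))
            (sum_nonneg fun k _ => mul_nonneg (hHnonneg k) (sq_nonneg _))
        · exact mul_div_sum_mul_le_div_mul_div_sum hC₂ hHnonneg (fun k => sq_nonneg _)
            (fun k hk => (hHband k ((hband k).1 hk).1 ((hband k).1 hk).2).1) hjband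
            (hHband j hjr hjm).2
    _ = C₁ / C₂ * ∫ ω, W ω j / ∑ k ∈ band, W ω k ∂μ := integral_const_mul _ _
    _ ≤ C₁ / C₂ * ((m - r : ℕ) : ℝ)⁻¹ := by
        have hC₁ : 0 ≤ C₁ := hC₂.le.trans ((hHband j hjr hjm).1.trans (hHband j hjr hjm).2)
        gcongr
    _ = C₁ / ((m - r : ℕ) * C₂) := by ring

theorem kendall_nonspiked_eig_upper_bound
    {Ω : Type*} [MeasurableSpace Ω] (μ : Measure Ω) [IsProbabilityMeasure μ]
    {q : ℕ} (U : Ω → Fin q → ℝ) (hUmeas : Measurable U)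
    -- `U` is uniform on the unit sphere of ℝ^q :
    (hUsphere : ∀ᵐ ω ∂μ, ∑ k, U ω k ^ 2 = 1)
    (hUunif : ∀ O : Matrix.orthogonalGroup (Fin q) ℝ,
      ProbabilityTheory.IdentDistrib (fun ω => (O : Matrix (Fin q) (Fin q) ℝ).mulVec (U ω)) U μ μ)
    (H : Fin q → ℝ) (hHnonneg : ∀ k, 0 ≤ H k)
    (r m : ℕ) (hrm : r < m) (hmq : m ≤ q)
    (C₁ C₂ : ℝ) (hC₂ : 0 < C₂)
    (hHband : ∀ k : Fin q, r ≤ (k : ℕ) → (k : ℕ) < m → C₂ ≤ H k ∧ H k ≤ C₁)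
    (j : Fin q) (hjr : r ≤ (j : ℕ)) (hjm : (j : ℕ) < m) :
    ∫ ω, (H j * U ω j ^ 2) / (∑ k, H k * U ω k ^ 2) ∂μ ≤ C₁ / ((m - r : ℕ) * C₂) :=
  kendall_nonspiked_eig_upper_bound_general μ U hUunif H hHnonneg r m hmq C₁ C₂ hC₂ hHband j hjr hjm
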